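/- arXiv:math/0207291 — 4 statements merged into one kernel-verified Lean document; each statement's English description precedes it below -/
import Mathlib

section
/- Let n, n₀, …, n_μ be positive integers with n ≥ n₀, with 4·n_{ν+1} ≤ n_ν for each 0 ≤ ν < μ, and with n_μ ≥ 1. Suppose that for each ν ∈ {0, …, μ} there exist: (i) a binary constant-weight code C_ν of length n in which every codeword has weight exactly n_ν and any two distinct codewords are at Hamming distance at least n_ν, with |C_ν| = M_ν; and (ii) a binary code S_ν of length n_ν in which any two distinct codewords are at Hamming distance at least ⌈n_ν/4⌉, with |S_ν| = K_ν. Then there exists a kissing configuration of size Σ_{ν=0}^{μ} M_ν · K_ν in dimension n with common norm √n₀; concretely, there is a set of Σ_ν M_ν K_ν points in EuclideanSpace ℝ (Fin n), each of Euclidean norm √n₀, such that any two distinct points are at Euclidean distance at least √n₀. (The points of level ν have exactly n_ν nonzero coordinates, each equal to ±√(n₀/n_ν), with support given by a codeword of C_ν and signs, read along the support in increasing coordinate order, given by a codeword of S_ν.) -/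
/-!
A point of level `ν` is `a_ν = √(n₀ / n_ν)` times a `0, ±1` vector whose support is a word of
`C_ν` and whose signs along the support are a word of `S_ν`, so its squared norm is `n₀`.
Two points of the same level with different supports differ by at least `a_ν` in at least
`n_ν` coordinates; with the same support they differ by `2 a_ν` in at least `n_ν / 4`
coordinates. Either way the squared distance is at least `a_ν² n_ν = n₀`. For levels
`ν < ν'` the inner product is at most `n_ν' a_ν a_ν' = n₀ √(n_ν' / n_ν) ≤ n₀ / 2`, because
`4 n_ν' ≤ n_ν`, so the squared distance is at least `2 n₀ - n₀`.
-/

open Finset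

lemma mul_mul_le_half_of_four_mul_le {a b p q r : ℝ} (ha : 0 ≤ a) (hb : 0 ≤ b) (hq : 0 ≤ q)
    (hpq : 4 * q ≤ p) (ha2 : a ^ 2 * p = r) (hb2 : b ^ 2 * q = r) : q * (a * b) ≤ r / 2 := by
  have hr : 0 ≤ r := hb2 ▸ by positivity
  refine (pow_le_pow_iff_left₀ (by positivity) (by positivity) two_ne_zero).mp ?_
  calc (q * (a * b)) ^ 2 = q * r * a ^ 2 := by rw [← hb2]; ring
    _ ≤ p * r * a ^ 2 / 4 := by nlinarith [mul_nonneg hr (sq_nonneg a)]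
    _ = (r / 2) ^ 2 := by rw [← ha2]; ring

lemma Fin.mul_le_of_lt {μ k : ℕ} {f : Fin (μ + 1) → ℕ} (hk : 0 < k)
    (hf : ∀ i : Fin μ, k * f i.succ ≤ f i.castSucc) {i j : Fin (μ + 1)} (hij : i < j) :
    k * f j ≤ f i := by
  have hanti : Antitone f :=
    Fin.antitone_iff_succ_le.mpr fun i => (Nat.le_mul_of_pos_left _ hk).trans (hf i)
  obtain ⟨i, rfl⟩ := Fin.exists_castSucc_eq.mpr (Fin.ne_last_of_lt hij)
  calc k * f j ≤ k * f i.succ := Nat.mul_le_mul_left k (hanti (Fin.castSucc_lt_iff_succ_le.mp hij))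
    _ ≤ f i.castSucc := hf i

lemma Set.injOn_of_le_dist {α β : Type*} [PseudoMetricSpace β] {s : Set α} {f : α → β} {r : ℝ}
    (hr : 0 < r) (h : ∀ x ∈ s, ∀ y ∈ s, x ≠ y → r ≤ dist (f x) (f y)) : Set.InjOn f s := by
  intro x hx y hy hxy
  by_contra hne
  have := h x hx y hy hne
  rw [hxy, dist_self] at this
  linarith

lemma ZMod.eq_zero_or_eq_one (z : ZMod 2) : z = 0 ∨ z = 1 := by decide +revert

noncomputable def signEntry (z t : ZMod 2) : ℝ := if z = 0 then 0 else if t = 0 then 1 else -1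

lemma signEntry_sq (z t : ZMod 2) : signEntry z t ^ 2 = if z ≠ 0 then 1 else 0 := by
  rcases ZMod.eq_zero_or_eq_one z with rfl | rfl <;>
  rcases ZMod.eq_zero_or_eq_one t with rfl | rfl <;> norm_num [signEntry]

lemma boole_ne_le_sq_sub_signEntry (z t z' t' : ZMod 2) :
    (if z ≠ z' then 1 else 0 : ℝ) ≤ (signEntry z t - signEntry z' t') ^ 2 := by
  rcases ZMod.eq_zero_or_eq_one z with rfl | rfl <;>
  rcases ZMod.eq_zero_or_eq_one t with rfl | rfl <;>
  rcases ZMod.eq_zero_or_eq_one z' with rfl | rfl <;>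
  rcases ZMod.eq_zero_or_eq_one t' with rfl | rfl <;> norm_num [signEntry]

lemma sq_sub_signEntry (z t t' : ZMod 2) (h : z = 0 → t = t') :
    (signEntry z t - signEntry z t') ^ 2 = 4 * if t ≠ t' then 1 else 0 := by
  rcases ZMod.eq_zero_or_eq_one z with rfl | rfl <;>
  rcases ZMod.eq_zero_or_eq_one t with rfl | rfl <;>
  rcases ZMod.eq_zero_or_eq_one t' with rfl | rfl <;> (revert h; norm_num [signEntry])

lemma signEntry_mul_le (z t z' t' : ZMod 2) :
    signEntry z t * signEntry z' t' ≤ if z' ≠ 0 then 1 else 0 := by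
  rcases ZMod.eq_zero_or_eq_one z with rfl | rfl <;>
  rcases ZMod.eq_zero_or_eq_one t with rfl | rfl <;>
  rcases ZMod.eq_zero_or_eq_one z' with rfl | rfl <;>
  rcases ZMod.eq_zero_or_eq_one t' with rfl | rfl <;> norm_num [signEntry]

lemma signEntry_eq_zero_iff (z t : ZMod 2) : signEntry z t = 0 ↔ z = 0 := by
  rcases ZMod.eq_zero_or_eq_one z with rfl | rfl <;>
  rcases ZMod.eq_zero_or_eq_one t with rfl | rfl <;> norm_num [signEntry]

lemma signEntry_eq_one_or_eq_neg_one {z : ZMod 2} (t : ZMod 2) (hz : z ≠ 0) :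
    signEntry z t = 1 ∨ signEntry z t = -1 := by
  rw [signEntry, if_neg hz]
  split_ifs <;> simp

section SignVector

variable {ι : Type*}

noncomputable def signVector (c t : ι → ZMod 2) : EuclideanSpace ℝ ι :=
  WithLp.toLp 2 fun i => signEntry (c i) (t i)

@[simp]
lemma signVector_apply (c t : ι → ZMod 2) (i : ι) : signVector c t i = signEntry (c i) (t i) :=
  rfl

variable [Fintype ι]

lemma norm_signVector_sq (c t : ι → ZMod 2) : ‖signVector c t‖ ^ 2 = hammingNorm c := by
  simp only [EuclideanSpace.real_norm_sq_eq, signVector_apply, signEntry_sq, hammingNorm,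
    natCast_card_filter]

lemma hammingDist_le_norm_signVector_sub_sq (c t c' t' : ι → ZMod 2) :
    (hammingDist c c' : ℝ) ≤ ‖signVector c t - signVector c' t'‖ ^ 2 := by
  rw [EuclideanSpace.real_norm_sq_eq, hammingDist, natCast_card_filter]
  exact sum_le_sum fun i _ => boole_ne_le_sq_sub_signEntry (c i) (t i) (c' i) (t' i)

lemma norm_signVector_sub_signVector_sq (c t t' : ι → ZMod 2) (h : ∀ i, c i = 0 → t i = t' i) :
    ‖signVector c t - signVector c t'‖ ^ 2 = 4 * hammingDist t t' := by
  rw [EuclideanSpace.real_norm_sq_eq, hammingDist, natCast_card_filter, mul_sum]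
  exact sum_congr rfl fun i _ => sq_sub_signEntry (c i) (t i) (t' i) (h i)

lemma inner_signVector_le (c t c' t' : ι → ZMod 2) :
    inner ℝ (signVector c t) (signVector c' t') ≤ hammingNorm c' := by
  rw [PiLp.inner_apply, hammingNorm, natCast_card_filter]
  refine sum_le_sum fun i _ => ?_
  simpa [mul_comm] using signEntry_mul_le (c i) (t i) (c' i) (t' i)

end SignVector

section ExtendAlong

variable {ι α : Type*} [LinearOrder ι] [Zero α] {w : ℕ}

/-- The word `s` written along `T` in increasing order; junk value `0` when `T.card ≠ w`. -/
noncomputable def extendAlong (T : Finset ι) (s : Fin w → α) : ι → α :=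
  if h : T.card = w then Function.extend (T.orderEmbOfFin h) s 0 else 0

lemma extendAlong_of_notMem {T : Finset ι} (s : Fin w → α) {i : ι} (hi : i ∉ T) :
    extendAlong T s i = 0 := by
  unfold extendAlong
  split_ifs with h
  · refine Function.extend_apply' _ _ _ fun ⟨j, hj⟩ => hi ?_
    rw [← hj]
    exact T.orderEmbOfFin_mem h j
  · rfl

lemma hammingDist_extendAlong [Fintype ι] [DecidableEq α] {T : Finset ι} (h : T.card = w)
    (s s' : Fin w → α) : hammingDist (extendAlong T s) (extendAlong T s') = hammingDist s s' := by
  set e := T.orderEmbOfFin h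
  have hext : ∀ s : Fin w → α, extendAlong T s = Function.extend e s 0 := fun s => dif_pos h
  have hsupp : ({i | extendAlong T s i ≠ extendAlong T s' i} : Finset ι) =
      ({j | s j ≠ s' j} : Finset (Fin w)).map e.toEmbedding := by
    ext i
    by_cases hi : ∃ j, e j = i
    · obtain ⟨j, rfl⟩ := hi
      simp [hext, e.injective.extend_apply]
    · simp only [mem_filter, mem_univ, true_and, hext, Function.extend_apply' _ _ _ hi]
      simp_all
  rw [hammingDist, hsupp, card_map]
  rfl

end ExtendAlong

section CodePoint

variable {ι : Type*} [Fintype ι] [LinearOrder ι] {w : ℕ}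

noncomputable def codePoint (a : ℝ) (c : ι → ZMod 2) (s : Fin w → ZMod 2) : EuclideanSpace ℝ ι :=
  a • signVector c (extendAlong {i | c i ≠ 0} s)

lemma codePoint_apply (a : ℝ) (c : ι → ZMod 2) (s : Fin w → ZMod 2) (i : ι) :
    codePoint a c s i = a * signEntry (c i) (extendAlong {i | c i ≠ 0} s i) :=
  rfl

lemma codePoint_apply_ne_zero_iff {a : ℝ} (ha : a ≠ 0) (c : ι → ZMod 2) (s : Fin w → ZMod 2)
    (i : ι) : codePoint a c s i ≠ 0 ↔ c i ≠ 0 := by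
  rw [codePoint_apply, ne_eq, mul_eq_zero, signEntry_eq_zero_iff, or_iff_right ha]

lemma codePoint_apply_eq_or {a : ℝ} {c : ι → ZMod 2} {s : Fin w → ZMod 2} {i : ι}
    (h : codePoint a c s i ≠ 0) : codePoint a c s i = a ∨ codePoint a c s i = -a := by
  have hci : c i ≠ 0 := fun hci => h (by rw [codePoint_apply, (signEntry_eq_zero_iff _ _).mpr hci,
    mul_zero])
  rw [codePoint_apply]
  rcases signEntry_eq_one_or_eq_neg_one (extendAlong {i | c i ≠ 0} s i) hci with h1 | h1 <;>
    simp [h1]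

lemma card_codePoint_ne_zero {a : ℝ} (ha : a ≠ 0) (c : ι → ZMod 2) (s : Fin w → ZMod 2) :
    #{i | codePoint a c s i ≠ 0} = hammingNorm c := by
  simp only [codePoint_apply_ne_zero_iff ha, hammingNorm]

lemma norm_codePoint_sq (a : ℝ) (c : ι → ZMod 2) (s : Fin w → ZMod 2) :
    ‖codePoint a c s‖ ^ 2 = a ^ 2 * hammingNorm c := by
  rw [codePoint, norm_smul, mul_pow, Real.norm_eq_abs, sq_abs, norm_signVector_sq]

lemma le_norm_codePoint_sub_sq_of_ne {a r : ℝ} {c c' : ι → ZMod 2} {s s' : Fin w → ZMod 2}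
    (ha2 : a ^ 2 * w = r) (hc : hammingNorm c = w) (hC : c ≠ c' → w ≤ hammingDist c c')
    (hS : s ≠ s' → w ≤ 4 * hammingDist s s') (hne : (c, s) ≠ (c', s')) :
    r ≤ ‖codePoint a c s - codePoint a c' s'‖ ^ 2 := by
  rw [codePoint, codePoint, ← smul_sub, norm_smul, mul_pow, Real.norm_eq_abs, sq_abs, ← ha2]
  refine mul_le_mul_of_nonneg_left ?_ (sq_nonneg a)
  by_cases hcc : c = c'
  · subst hcc
    have hss : s ≠ s' := fun h => hne (h ▸ rfl)
    rw [norm_signVector_sub_signVector_sq _ _ _ fun i hi => by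
      rw [extendAlong_of_notMem s (by simpa using hi), extendAlong_of_notMem s' (by simpa using hi)],
      hammingDist_extendAlong hc]
    exact_mod_cast hS hss
  · exact (Nat.cast_le.mpr (hC hcc)).trans (hammingDist_le_norm_signVector_sub_sq _ _ _ _)

lemma le_norm_codePoint_sub_sq_of_four_mul_le {a b r : ℝ} {p q w' : ℕ} {c c' : ι → ZMod 2}
    {s : Fin w → ZMod 2} {s' : Fin w' → ZMod 2} (ha : 0 ≤ a) (hb : 0 ≤ b)
    (hc : hammingNorm c = p) (hc' : hammingNorm c' = q) (hpq : 4 * q ≤ p)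
    (ha2 : a ^ 2 * p = r) (hb2 : b ^ 2 * q = r) :
    r ≤ ‖codePoint a c s - codePoint b c' s'‖ ^ 2 := by
  have hinner : inner ℝ (codePoint a c s) (codePoint b c' s') ≤ q * (a * b) := by
    rw [codePoint, codePoint, real_inner_smul_left, real_inner_smul_right, ← mul_assoc,
      mul_comm _ (a * b), ← hc']
    exact mul_le_mul_of_nonneg_left (inner_signVector_le _ _ _ _) (mul_nonneg ha hb)
  have hhalf := mul_mul_le_half_of_four_mul_le ha hb q.cast_nonneg (by exact_mod_cast hpq) ha2 hb2
  rw [norm_sub_sq_real, norm_codePoint_sq, norm_codePoint_sq, hc, hc', ha2, hb2]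
  linarith

lemma le_norm_codePoint_sub_sq_of_level_ne {μ : ℕ} {ns : Fin (μ + 1) → ℕ}
    (hchain : ∀ ν : Fin μ, 4 * ns ν.succ ≤ ns ν.castSucc) {a : Fin (μ + 1) → ℝ} {r : ℝ}
    (ha : ∀ ν, 0 ≤ a ν) (ha2 : ∀ ν, a ν ^ 2 * ns ν = r) {ν ν' : Fin (μ + 1)} {c c' : ι → ZMod 2}
    {s : Fin w → ZMod 2} {w' : ℕ} {s' : Fin w' → ZMod 2} (hc : hammingNorm c = ns ν)
    (hc' : hammingNorm c' = ns ν') (hνν' : ν ≠ ν') :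
    r ≤ ‖codePoint (a ν) c s - codePoint (a ν') c' s'‖ ^ 2 := by
  rcases hνν'.lt_or_gt with hlt | hgt
  · exact le_norm_codePoint_sub_sq_of_four_mul_le (ha ν) (ha ν') hc hc'
      (Fin.mul_le_of_lt four_pos hchain hlt) (ha2 ν) (ha2 ν')
  · rw [norm_sub_rev]
    exact le_norm_codePoint_sub_sq_of_four_mul_le (ha ν') (ha ν) hc' hc
      (Fin.mul_le_of_lt four_pos hchain hgt) (ha2 ν') (ha2 ν)

end CodePoint

theorem kissing_configuration_from_codes_general
    (n μ : ℕ) (ns : Fin (μ + 1) → ℕ)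
    (hpos : ∀ ν, 0 < ns ν)
    (hchain : ∀ ν : Fin μ, 4 * ns ν.succ ≤ ns ν.castSucc)
    (M K : Fin (μ + 1) → ℕ)
    (C : Fin (μ + 1) → Finset (Fin n → ZMod 2))
    (S : (ν : Fin (μ + 1)) → Finset (Fin (ns ν) → ZMod 2))
    (hCcard : ∀ ν, (C ν).card = M ν)
    (hCweight : ∀ ν, ∀ c ∈ C ν, hammingNorm c = ns ν)
    (hCdist : ∀ ν, ∀ c ∈ C ν, ∀ c' ∈ C ν, c ≠ c' → ns ν ≤ hammingDist c c')
    (hScard : ∀ ν, (S ν).card = K ν)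
    (hSdist : ∀ ν, ∀ s ∈ S ν, ∀ s' ∈ S ν, s ≠ s' →
      (ns ν + 3) / 4 ≤ hammingDist s s') :
    ∃ X : Finset (EuclideanSpace ℝ (Fin n)),
      X.card = ∑ ν, M ν * K ν ∧
      (∀ x ∈ X, ‖x‖ = Real.sqrt (ns 0)) ∧
      (∀ x ∈ X, ∀ y ∈ X, x ≠ y → Real.sqrt (ns 0) ≤ dist x y) ∧
      (∀ x ∈ X, ∃ ν : Fin (μ + 1),
        (Finset.univ.filter fun i => x i ≠ 0).card = ns ν ∧
        ∀ i, x i ≠ 0 →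
          x i = Real.sqrt ((ns 0 : ℝ) / (ns ν)) ∨
          x i = -Real.sqrt ((ns 0 : ℝ) / (ns ν))) := by
  classical
  set a : Fin (μ + 1) → ℝ := fun ν => √(ns 0 / ns ν)
  have hns : ∀ ν, (0 : ℝ) < ns ν := fun ν => by exact_mod_cast hpos ν
  have ha : ∀ ν, 0 < a ν := fun ν => Real.sqrt_pos.mpr (div_pos (hns 0) (hns ν))
  have ha2 : ∀ ν, a ν ^ 2 * ns ν = ns 0 := fun ν => by
    rw [Real.sq_sqrt (div_pos (hns 0) (hns ν)).le, div_mul_cancel₀ _ (hns ν).ne']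
  let point : (Σ ν, (Fin n → ZMod 2) × (Fin (ns ν) → ZMod 2)) → EuclideanSpace ℝ (Fin n) :=
    fun p => codePoint (a p.1) p.2.1 p.2.2
  let P := univ.sigma fun ν => C ν ×ˢ S ν
  have hP : ∀ p ∈ P, p.2.1 ∈ C p.1 ∧ p.2.2 ∈ S p.1 := fun p hp => mem_product.mp (mem_sigma.mp hp).2
  have hsep : ∀ p ∈ P, ∀ q ∈ P, p ≠ q → √(ns 0) ≤ dist (point p) (point q) := by
    rintro ⟨ν, c, s⟩ hp ⟨ν', c', s'⟩ hq hne
    obtain ⟨hc, hs⟩ := hP _ hp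
    obtain ⟨hc', hs'⟩ := hP _ hq
    change √(ns 0) ≤ dist (codePoint (a ν) c s) (codePoint (a ν') c' s')
    rw [Real.sqrt_le_left dist_nonneg, dist_eq_norm]
    rcases eq_or_ne ν ν' with rfl | hνν'
    · exact le_norm_codePoint_sub_sq_of_ne (ha2 ν) (hCweight ν c hc) (hCdist ν c hc c' hc')
        (fun hss => by have := hSdist ν s hs s' hs' hss; omega) fun h => hne (h ▸ rfl)
    · exact le_norm_codePoint_sub_sq_of_level_ne hchain (fun ν => (ha ν).le) ha2
        (hCweight ν c hc) (hCweight ν' c' hc') hνν'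
  refine ⟨P.image point, ?_, ?_, ?_, ?_⟩
  · rw [card_image_of_injOn (Set.injOn_of_le_dist (Real.sqrt_pos.mpr (hns 0)) hsep), card_sigma]
    simp only [card_product, hCcard, hScard]
  · refine forall_mem_image.mpr fun p hp => ?_
    rw [← Real.sqrt_sq (norm_nonneg _), norm_codePoint_sq, hCweight _ _ (hP p hp).1, ha2]
  · simp only [forall_mem_image]
    exact fun p hp q hq hne => hsep p hp q hq (ne_of_apply_ne _ hne)
  · exact forall_mem_image.mpr fun p hp => ⟨p.1,
      (card_codePoint_ne_zero (ha p.1).ne' _ _).trans (hCweight _ _ (hP p hp).1),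
      fun i => codePoint_apply_eq_or⟩

/-- The general construction: given, for each level `ν ∈ {0,…,μ}` of a chain of support
sizes `n ≥ n₀ ≥ 4n₁ ≥ … ≥ 4^μ n_μ ≥ 1`, a constant-weight binary code `C ν` of length `n`,
weight `ns ν` and minimum distance `ns ν` of size `M ν`, and a binary code `S ν` of length
`ns ν` and minimum distance `⌈ns ν / 4⌉` of size `K ν`, there is a kissing configuration of
size `∑ ν, M ν * K ν` in dimension `n` with common norm `√n₀`, whose points of level `ν`
have exactly `ns ν` nonzero coordinates, each equal to `±√(n₀ / ns ν)`. -/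
theorem kissing_configuration_from_codes
    (n μ : ℕ) (ns : Fin (μ + 1) → ℕ)
    (hn : 0 < n) (hpos : ∀ ν, 0 < ns ν)
    (hn0 : ns 0 ≤ n)
    (hchain : ∀ ν : Fin μ, 4 * ns ν.succ ≤ ns ν.castSucc)
    (M K : Fin (μ + 1) → ℕ)
    (C : Fin (μ + 1) → Finset (Fin n → ZMod 2))
    (S : (ν : Fin (μ + 1)) → Finset (Fin (ns ν) → ZMod 2))
    (hCcard : ∀ ν, (C ν).card = M ν)
    (hCweight : ∀ ν, ∀ c ∈ C ν, hammingNorm c = ns ν)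
    (hCdist : ∀ ν, ∀ c ∈ C ν, ∀ c' ∈ C ν, c ≠ c' → ns ν ≤ hammingDist c c')
    (hScard : ∀ ν, (S ν).card = K ν)
    (hSdist : ∀ ν, ∀ s ∈ S ν, ∀ s' ∈ S ν, s ≠ s' →
      (ns ν + 3) / 4 ≤ hammingDist s s') :
    ∃ X : Finset (EuclideanSpace ℝ (Fin n)),
      X.card = ∑ ν, M ν * K ν ∧
      (∀ x ∈ X, ‖x‖ = Real.sqrt (ns 0)) ∧
      (∀ x ∈ X, ∀ y ∈ X, x ≠ y → Real.sqrt (ns 0) ≤ dist x y) ∧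
      (∀ x ∈ X, ∃ ν : Fin (μ + 1),
        (Finset.univ.filter fun i => x i ≠ 0).card = ns ν ∧
        ∀ i, x i ≠ 0 →
          x i = Real.sqrt ((ns 0 : ℝ) / (ns ν)) ∨
          x i = -Real.sqrt ((ns 0 : ℝ) / (ns ν))) :=
  kissing_configuration_from_codes_general n μ ns hpos hchain M K C S hCcard hCweight hCdist hScard
    hSdist
end

section
/- Let n, m, n₀ be positive integers and let a = √(n₀/m). Let v and w be vectors in EuclideanSpace ℝ (Fin n) that have the same support of cardinality m, all of whose nonzero entries lie in {−a, a}. If v and w differ in at least ⌈m/4⌉ coordinates, then ‖v − w‖² ≥ n₀, i.e., the Euclidean distance between v and w is at least √n₀. -/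
/-- Two vectors of shape `±a^m 0^(n-m)` (with `a = √(n₀/m)`) having the same support of
size `m`, which differ in at least `⌈m/4⌉` coordinates, satisfy `‖v - w‖² ≥ n₀`, i.e.
they are at Euclidean distance at least `√n₀`. -/
theorem dist_ge_of_same_support_signs
    (n m n₀ : ℕ) (hn : 0 < n) (hm : 0 < m) (hn₀ : 0 < n₀)
    (a : ℝ) (ha : a = Real.sqrt ((n₀ : ℝ) / m))
    (v w : EuclideanSpace ℝ (Fin n))
    (hsupp : {i | v i ≠ 0} = {i | w i ≠ 0})
    (hcard : (Finset.univ.filter fun i => v i ≠ 0).card = m)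
    (hv : ∀ i, v i ≠ 0 → v i = a ∨ v i = -a)
    (hw : ∀ i, w i ≠ 0 → w i = a ∨ w i = -a)
    (hdiff : (m + 3) / 4 ≤ (Finset.univ.filter fun i => v i ≠ w i).card) :
    (n₀ : ℝ) ≤ ‖v - w‖ ^ 2 ∧ Real.sqrt n₀ ≤ dist v w := by
  have ha2 : a ^ 2 = (n₀ : ℝ) / m := by
    rw [ha, Real.sq_sqrt (by positivity)]
  set S := Finset.univ.filter fun i => v i ≠ w i with hS
  set c := S.card with hc
  -- each differing coordinate contributes (2a)^2
  have hkey : ∀ i ∈ S, (v i - w i) ^ 2 = 4 * a ^ 2 := by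
    intro i hi
    simp only [hS, Finset.mem_filter] at hi
    have hne := hi.2
    have hv0 : v i ≠ 0 := by
      intro h0
      have hw0 : w i ≠ 0 → False := by
        intro hw0
        have : i ∈ {i | v i ≠ 0} := hsupp ▸ hw0
        exact this h0
      apply hne
      rw [h0]
      by_contra h
      exact hw0 (fun hw' => h hw'.symm) |>.elim
    have hw0 : w i ≠ 0 := by
      have : i ∈ {i | w i ≠ 0} := hsupp ▸ hv0
      exact this
    rcases hv i hv0 with h1 | h1 <;> rcases hw i hw0 with h2 | h2 <;>
      rw [h1, h2] at hne ⊢ <;> ring_nf <;> simp_all <;> ring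
  have hnorm : ‖v - w‖ ^ 2 = ∑ i, (v i - w i) ^ 2 := by
    rw [EuclideanSpace.norm_eq, Real.sq_sqrt (by positivity)]
    congr 1
    ext i
    rw [Real.norm_eq_abs, sq_abs]
    rfl
  have hsum : (c : ℝ) * (4 * a ^ 2) ≤ ∑ i, (v i - w i) ^ 2 := by
    calc (c : ℝ) * (4 * a ^ 2) = ∑ i ∈ S, (v i - w i) ^ 2 := by
          rw [Finset.sum_congr rfl hkey, Finset.sum_const, nsmul_eq_mul]
      _ ≤ ∑ i, (v i - w i) ^ 2 :=
          Finset.sum_le_sum_of_subset_of_nonneg (Finset.subset_univ S)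
            (fun i _ _ => sq_nonneg _)
  have hmc : m ≤ 4 * c := by
    have : (m + 3) / 4 ≤ c := hdiff
    omega
  have hmain : (n₀ : ℝ) ≤ ‖v - w‖ ^ 2 := by
    rw [hnorm]
    refine le_trans ?_ hsum
    rw [ha2]
    have hm' : (0:ℝ) < m := by positivity
    rw [show (c:ℝ) * (4 * ((n₀:ℝ)/m)) = (c * 4 * n₀) / m by ring, le_div_iff₀ hm']
    have h1 : (m : ℝ) ≤ 4 * c := by exact_mod_cast hmc
    nlinarith [show (0:ℝ) < n₀ by positivity]
  refine ⟨hmain, ?_⟩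
  rw [dist_eq_norm]
  calc Real.sqrt n₀ ≤ Real.sqrt (‖v - w‖ ^ 2) := Real.sqrt_le_sqrt hmain
    _ = ‖v - w‖ := Real.sqrt_sq (norm_nonneg _)
end

section
/- Let n₀, m, m' be positive integers with 4·m' ≤ m, and set a = √(n₀/m) and b = √(n₀/m'). Let v be a vector in EuclideanSpace ℝ (Fin n) with exactly m nonzero entries, each lying in {−a, a}, and let w be a vector with exactly m' nonzero entries, each lying in {−b, b}. Then the inner product satisfies ⟨v, w⟩ ≤ n₀/2, and consequently ‖v − w‖² = 2n₀ − 2⟨v, w⟩ ≥ n₀, so the Euclidean distance between v and w is at least √n₀. -/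
/-! Both vectors have squared norm `n₀`. In `⟪v, w⟫` only the `m'` coordinates of the support
of `w` contribute, each at most `a * b`, and `m' * a * b = n₀ * √(m' / m) ≤ n₀ / 2`. -/

open scoped RealInnerProductSpace
open Finset

section SignVectors

variable {ι : Type*} [Fintype ι]

lemma EuclideanSpace.norm_sq_eq_card_support_mul_sq {v : EuclideanSpace ℝ ι} {a : ℝ}
    (hv : ∀ i, v i ≠ 0 → |v i| = a) : ‖v‖ ^ 2 = #{i | v i ≠ 0} * a ^ 2 := by
  rw [EuclideanSpace.norm_sq_eq, ← sum_filter_of_ne fun i _ hi => by simpa using hi,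
    sum_congr rfl fun i hi => by rw [Real.norm_eq_abs, hv i (mem_filter.1 hi).2], sum_const,
    nsmul_eq_mul]

lemma EuclideanSpace.inner_le_card_support_mul {v w : EuclideanSpace ℝ ι} {a b : ℝ}
    (ha : 0 ≤ a) (hv : ∀ i, v i ≠ 0 → |v i| = a) (hw : ∀ i, w i ≠ 0 → |w i| = b) :
    ⟪v, w⟫ ≤ #{i | w i ≠ 0} * (a * b) := by
  have hva (i : ι) : |v i| ≤ a := (eq_or_ne (v i) 0).elim (fun h => by simpa [h]) (hv i · |>.le)
  calc ⟪v, w⟫ = ∑ i ∈ {i | w i ≠ 0}, v i * w i := by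
        rw [sum_filter_of_ne fun i _ hi => right_ne_zero_of_mul hi]
        simp [PiLp.inner_apply, mul_comm]
    _ ≤ ∑ _i ∈ {i | w i ≠ 0}, a * b := sum_le_sum fun i hi =>
        (le_abs_self _).trans <| (abs_mul _ _).trans_le <|
          mul_le_mul (hva i) (hw i (mem_filter.1 hi).2).le (abs_nonneg _) ha
    _ = #{i | w i ≠ 0} * (a * b) := by rw [sum_const, nsmul_eq_mul]

end SignVectors

lemma mul_sqrt_div_mul_sqrt_div_le_half {x m m' : ℝ} (hx : 0 ≤ x) (hm' : 0 < m')
    (h : 4 * m' ≤ m) : m' * (√(x / m) * √(x / m')) ≤ x / 2 := by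
  have hm : 0 < m := by linarith
  have key : m' ^ 2 * (x / m * (x / m')) ≤ (x / 2) ^ 2 :=
    calc m' ^ 2 * (x / m * (x / m')) = x ^ 2 * (m' / m) := by field_simp
      _ ≤ x ^ 2 * (1 / 4) := by
        gcongr x ^ 2 * ?_
        rw [div_le_iff₀ hm]; linarith
      _ = (x / 2) ^ 2 := by ring
  calc m' * (√(x / m) * √(x / m')) = √(m' ^ 2 * (x / m * (x / m'))) := by
        rw [Real.sqrt_mul (sq_nonneg _), Real.sqrt_sq hm'.le, Real.sqrt_mul (by positivity)]
    _ ≤ √((x / 2) ^ 2) := Real.sqrt_le_sqrt key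
    _ = x / 2 := Real.sqrt_sq (by positivity)

theorem dist_ge_of_different_levels_general
    (n n₀ m m' : ℕ) (hm : 0 < m) (hm' : 0 < m')
    (hmm : 4 * m' ≤ m)
    (a b : ℝ) (ha : a = Real.sqrt ((n₀ : ℝ) / m)) (hb : b = Real.sqrt ((n₀ : ℝ) / m'))
    (v w : EuclideanSpace ℝ (Fin n))
    (hvcard : (Finset.univ.filter fun i => v i ≠ 0).card = m)
    (hv : ∀ i, v i ≠ 0 → v i = a ∨ v i = -a)
    (hwcard : (Finset.univ.filter fun i => w i ≠ 0).card = m')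
    (hw : ∀ i, w i ≠ 0 → w i = b ∨ w i = -b) :
    (inner ℝ v w : ℝ) ≤ (n₀ : ℝ) / 2 ∧
    ‖v - w‖ ^ 2 = 2 * n₀ - 2 * (inner ℝ v w : ℝ) ∧
    (n₀ : ℝ) ≤ ‖v - w‖ ^ 2 ∧
    Real.sqrt n₀ ≤ dist v w := by
  have ha0 : 0 ≤ a := ha ▸ Real.sqrt_nonneg _
  have hb0 : 0 ≤ b := hb ▸ Real.sqrt_nonneg _
  have hva : ∀ i, v i ≠ 0 → |v i| = a := fun i hi => (abs_eq ha0).2 (hv i hi)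
  have hwb : ∀ i, w i ≠ 0 → |w i| = b := fun i hi => (abs_eq hb0).2 (hw i hi)
  have hnv : ‖v‖ ^ 2 = n₀ := by
    rw [EuclideanSpace.norm_sq_eq_card_support_mul_sq hva, hvcard, ha,
      Real.sq_sqrt (by positivity)]
    field_simp
  have hnw : ‖w‖ ^ 2 = n₀ := by
    rw [EuclideanSpace.norm_sq_eq_card_support_mul_sq hwb, hwcard, hb,
      Real.sq_sqrt (by positivity)]
    field_simp
  have hinner : ⟪v, w⟫ ≤ n₀ / 2 :=
    calc ⟪v, w⟫ ≤ m' * (a * b) := by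
          simpa only [hwcard] using EuclideanSpace.inner_le_card_support_mul ha0 hva hwb
      _ ≤ n₀ / 2 := ha ▸ hb ▸ mul_sqrt_div_mul_sqrt_div_le_half (Nat.cast_nonneg _)
          (Nat.cast_pos.2 hm') (by exact_mod_cast hmm)
  have hdist : ‖v - w‖ ^ 2 = 2 * n₀ - 2 * ⟪v, w⟫ := by
    rw [norm_sub_sq_real, hnv, hnw]; ring
  have hdist_ge : (n₀ : ℝ) ≤ ‖v - w‖ ^ 2 := by linarith
  refine ⟨hinner, hdist, hdist_ge, ?_⟩
  exact Real.sqrt_le_iff.2 ⟨dist_nonneg, dist_eq_norm v w ▸ hdist_ge⟩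

/-- Two vectors from different levels of the construction: `v` has exactly `m` nonzero
entries in `{±√(n₀/m)}` and `w` has exactly `m'` nonzero entries in `{±√(n₀/m')}`, with
`4m' ≤ m`. Then `⟪v, w⟫ ≤ n₀/2`, hence `‖v - w‖² = 2n₀ - 2⟪v, w⟫ ≥ n₀`, so `v` and `w`
are at Euclidean distance at least `√n₀`. -/
theorem dist_ge_of_different_levels
    (n n₀ m m' : ℕ) (hn₀ : 0 < n₀) (hm : 0 < m) (hm' : 0 < m')
    (hmm : 4 * m' ≤ m)
    (a b : ℝ) (ha : a = Real.sqrt ((n₀ : ℝ) / m)) (hb : b = Real.sqrt ((n₀ : ℝ) / m'))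
    (v w : EuclideanSpace ℝ (Fin n))
    (hvcard : (Finset.univ.filter fun i => v i ≠ 0).card = m)
    (hv : ∀ i, v i ≠ 0 → v i = a ∨ v i = -a)
    (hwcard : (Finset.univ.filter fun i => w i ≠ 0).card = m')
    (hw : ∀ i, w i ≠ 0 → w i = b ∨ w i = -b) :
    (inner ℝ v w : ℝ) ≤ (n₀ : ℝ) / 2 ∧
    ‖v - w‖ ^ 2 = 2 * n₀ - 2 * (inner ℝ v w : ℝ) ∧
    (n₀ : ℝ) ≤ ‖v - w‖ ^ 2 ∧
    Real.sqrt n₀ ≤ dist v w :=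
  dist_ge_of_different_levels_general n n₀ m m' hm hm' hmm a b ha hb v w hvcard hv hwcard hw
end

section
/- There exists a kissing configuration of size 240 in dimension 8 with common norm 2√2: a set of 240 points in EuclideanSpace ℝ (Fin 8), each of Euclidean norm √8, such that any two distinct points are at Euclidean distance at least √8. It can be realized by taking the 128 vectors of shape ±1^8 whose sign patterns form a binary code of length 8 and minimum distance 2 (the even-weight code), together with the 112 vectors of shape ±2² 0⁶ with all 28 two-element supports and all 4 sign patterns. -/
/-!
Doubling `E₈ = D₈ ∪ (D₈ + ½)` puts it inside `ℤ⁸`: `2E₈` consists of the integer vectors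
whose coordinates are all even or all odd and whose coordinate sum is divisible by `4`, and it
contains both families of the statement, all of squared norm `8`. Inner products in `2E₈` are
divisible by `4`, and for distinct vectors of squared norm `8` they are `< 8`, hence `≤ 4`; so
the squared distance `16 - 2⟪v, w⟫` is at least `8`.
-/

open Finset

open RealInnerProductSpace in
theorem le_dist_of_inner_eq_int_mul {E : Type*} [NormedAddCommGroup E] [InnerProductSpace ℝ E]
    {x y : E} {r : ℝ} (hx : ‖x‖ = r) (hy : ‖y‖ = r) (hxy : x ≠ y) (k : ℤ)
    (hk : ⟪x, y⟫ = k * (r ^ 2 / 2)) : r ≤ dist x y := by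
  have hr : 0 ≤ r := hx ▸ norm_nonneg x
  have hdist : dist x y ^ 2 = (2 - k) * r ^ 2 := by
    rw [dist_eq_norm, norm_sub_sq_real, hx, hy, hk]; ring
  have hpos : 0 < (2 - k) * r ^ 2 := hdist ▸ pow_pos (dist_pos.2 hxy) 2
  have hk1 : (k : ℝ) ≤ 1 := by
    have : k < 2 := by exact_mod_cast (sub_pos.1 (pos_of_mul_pos_left hpos (sq_nonneg r)))
    exact_mod_cast Int.le_sub_one_of_lt this
  refine (pow_le_pow_iff_left₀ hr dist_nonneg two_ne_zero).1 ?_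
  rw [hdist]
  nlinarith [hk1, sq_nonneg r]

namespace Kissing8

variable {ι : Type*}

def toEuclidean (v : ι → ℤ) : EuclideanSpace ℝ ι := WithLp.toLp 2 fun i => (v i : ℝ)

@[simp]
theorem toEuclidean_apply (v : ι → ℤ) (i : ι) : toEuclidean v i = v i := rfl

theorem toEuclidean_injective : Function.Injective (toEuclidean (ι := ι)) :=
  fun v w h => funext fun i => by simpa using congrArg (fun x : EuclideanSpace ℝ ι => x i) h

section

variable [Fintype ι]

/-- Membership in `2Dₙ⁺`, the doubled `Dₙ ∪ (Dₙ + ½)`; for `n = 8` this is `2E₈`. -/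
def InTwoDPlus (v : ι → ℤ) : Prop :=
  ((∀ i, Even (v i)) ∨ (∀ i, Odd (v i))) ∧ 4 ∣ ∑ i, v i

theorem four_dvd_mul_of_even_of_even {a b : ℤ} (ha : Even a) (hb : Even b) : 4 ∣ a * b :=
  mul_dvd_mul ha.two_dvd hb.two_dvd

theorem four_dvd_sum_mul (hn : 4 ∣ Fintype.card ι) {v w : ι → ℤ}
    (hv : InTwoDPlus v) (hw : InTwoDPlus w) : 4 ∣ ∑ i, v i * w i := by
  obtain ⟨hv | hv, hsv⟩ := hv <;> obtain ⟨hw | hw, hsw⟩ := hw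
  · exact dvd_sum fun i _ => four_dvd_mul_of_even_of_even (hv i) (hw i)
  · have h : 4 ∣ ∑ i, (v i * w i - v i) := dvd_sum fun i _ => by
      rw [← mul_sub_one]
      exact four_dvd_mul_of_even_of_even (hv i) ((hw i).sub_odd odd_one)
    rw [sum_sub_distrib] at h
    omega
  · have h : 4 ∣ ∑ i, (v i * w i - w i) := dvd_sum fun i _ => by
      rw [← sub_one_mul]
      exact four_dvd_mul_of_even_of_even ((hv i).sub_odd odd_one) (hw i)
    rw [sum_sub_distrib] at h
    omega
  · have h : 4 ∣ ∑ i, (v i * w i - v i - w i + 1) := dvd_sum fun i _ => by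
      rw [show v i * w i - v i - w i + 1 = (v i - 1) * (w i - 1) by ring]
      exact four_dvd_mul_of_even_of_even ((hv i).sub_odd odd_one) ((hw i).sub_odd odd_one)
    simp only [sum_add_distrib, sum_sub_distrib, sum_const, card_univ, nsmul_eq_mul, mul_one] at h
    omega

theorem sum_eq_card_sub_two_mul_card_neg_one {v : ι → ℤ} (hv : ∀ i, v i = 1 ∨ v i = -1) :
    ∑ i, v i = Fintype.card ι - 2 * #{i | v i = -1} := by
  have h : ∀ i, v i = 1 - 2 * if v i = -1 then 1 else 0 := fun i => by
    rcases hv i with h | h <;> simp [h]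
  rw [sum_congr rfl fun i _ => h i, sum_sub_distrib, ← mul_sum, sum_boole]
  simp

theorem inTwoDPlus_of_sign (hn : 4 ∣ Fintype.card ι) {v : ι → ℤ}
    (hv : ∀ i, v i = 1 ∨ v i = -1) (he : Even #{i | v i = -1}) : InTwoDPlus v := by
  refine ⟨.inr fun i => ?_, ?_⟩
  · rcases hv i with h | h <;> simp [h]
  · rw [sum_eq_card_sub_two_mul_card_neg_one hv]
    obtain ⟨m, hm⟩ := he
    omega

theorem sum_sq_of_sign {v : ι → ℤ} (hv : ∀ i, v i = 1 ∨ v i = -1) :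
    ∑ i, v i ^ 2 = Fintype.card ι := by
  have h : ∀ i, v i ^ 2 = 1 := fun i => by rcases hv i with h | h <;> simp [h]
  simp [h]

theorem inTwoDPlus_of_two {v : ι → ℤ} (hv : ∀ i, v i = 2 ∨ v i = 0 ∨ v i = -2)
    (he : Even #{i | v i ≠ 0}) : InTwoDPlus v := by
  refine ⟨.inl fun i => ?_, ?_⟩
  · rcases hv i with h | h | h <;> simp [h]
  · have h : 4 ∣ ∑ i, (v i - 2 * if v i ≠ 0 then 1 else 0) := dvd_sum fun i _ => by
      rcases hv i with h | h | h <;> simp [h]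
    rw [sum_sub_distrib, ← mul_sum, sum_boole] at h
    obtain ⟨m, hm⟩ := he
    rw [hm] at h
    push_cast at h
    omega

theorem sum_sq_of_two {v : ι → ℤ} (hv : ∀ i, v i = 2 ∨ v i = 0 ∨ v i = -2) :
    ∑ i, v i ^ 2 = 4 * #{i | v i ≠ 0} := by
  have h : ∀ i, v i ^ 2 = 4 * if v i ≠ 0 then 1 else 0 := fun i => by
    rcases hv i with h | h | h <;> simp [h]
  rw [sum_congr rfl fun i _ => h i, ← mul_sum, sum_boole]

theorem inner_toEuclidean (v w : ι → ℤ) :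
    inner ℝ (toEuclidean v) (toEuclidean w) = ((∑ i, v i * w i : ℤ) : ℝ) := by
  simp [PiLp.inner_apply, mul_comm]

theorem norm_toEuclidean (v : ι → ℤ) :
    ‖toEuclidean v‖ = √((∑ i, v i ^ 2 : ℤ) : ℝ) := by
  rw [norm_eq_sqrt_real_inner, inner_toEuclidean]
  simp [sq]

theorem sqrt_eight_le_dist_toEuclidean (hn : 4 ∣ Fintype.card ι)
    {v w : ι → ℤ} (hv : InTwoDPlus v) (hw : InTwoDPlus w) (hv8 : ∑ i, v i ^ 2 = 8)
    (hw8 : ∑ i, w i ^ 2 = 8) (hvw : v ≠ w) : √8 ≤ dist (toEuclidean v) (toEuclidean w) := by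
  obtain ⟨k, hk⟩ := four_dvd_sum_mul hn hv hw
  refine le_dist_of_inner_eq_int_mul (by simp [norm_toEuclidean, hv8])
    (by simp [norm_toEuclidean, hw8]) (toEuclidean_injective.ne hvw) k ?_
  rw [inner_toEuclidean, hk, Real.sq_sqrt (by norm_num)]
  push_cast
  ring

end

def oddMinVectors : Finset (Fin 8 → ℤ) :=
  {v ∈ Fintype.piFinset fun _ => {1, -1} | Even #{i | v i = -1}}

def evenMinVectors : Finset (Fin 8 → ℤ) :=
  {v ∈ Fintype.piFinset fun _ => {2, 0, -2} | #{i | v i ≠ 0} = 2}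

theorem card_oddMinVectors : oddMinVectors.card = 128 := by decide +kernel

theorem card_evenMinVectors : evenMinVectors.card = 112 := by decide +kernel

theorem mem_oddMinVectors {v : Fin 8 → ℤ} :
    v ∈ oddMinVectors ↔ (∀ i, v i = 1 ∨ v i = -1) ∧ Even #{i | v i = -1} := by
  simp [oddMinVectors]

theorem mem_evenMinVectors {v : Fin 8 → ℤ} :
    v ∈ evenMinVectors ↔ (∀ i, v i = 2 ∨ v i = 0 ∨ v i = -2) ∧ #{i | v i ≠ 0} = 2 := by
  simp [evenMinVectors]

theorem disjoint_oddMinVectors_evenMinVectors : Disjoint oddMinVectors evenMinVectors := by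
  refine disjoint_left.2 fun v hodd heven => ?_
  have h1 := (mem_oddMinVectors.1 hodd).1 0
  have h2 := (mem_evenMinVectors.1 heven).1 0
  omega

theorem inTwoDPlus_and_sum_sq_of_mem {v : Fin 8 → ℤ}
    (h : v ∈ oddMinVectors ∪ evenMinVectors) : InTwoDPlus v ∧ ∑ i, v i ^ 2 = 8 := by
  rcases mem_union.1 h with h | h
  · obtain ⟨hv, he⟩ := mem_oddMinVectors.1 h
    exact ⟨inTwoDPlus_of_sign (by decide) hv he, by simp [sum_sq_of_sign hv]⟩
  · obtain ⟨hv, hs⟩ := mem_evenMinVectors.1 h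
    exact ⟨inTwoDPlus_of_two hv (hs ▸ even_two), by rw [sum_sq_of_two hv, hs]; rfl⟩

end Kissing8

open Kissing8

/-- A kissing configuration of size 240 in dimension 8 with common norm `2√2 = √8`:
240 points of norm `√8` with pairwise distances at least `√8`, realized as the 128
vectors of shape `±1⁸` whose sign patterns have an even number of minus signs (the even
weight code of length 8, minimum distance 2), together with the 112 vectors of shape
`±2² 0⁶` (all 28 two-element supports and all 4 sign patterns). -/
theorem kissing_dim8 :
    ∃ X X₀ X₁ : Finset (EuclideanSpace ℝ (Fin 8)),
      X = X₀ ∪ X₁ ∧ Disjoint X₀ X₁ ∧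
      X.card = 240 ∧ X₀.card = 128 ∧ X₁.card = 112 ∧
      (∀ x ∈ X₀, (∀ i, x i = 1 ∨ x i = -1) ∧
        Even (Finset.univ.filter fun i => x i = -1).card) ∧
      (∀ x ∈ X₁, (Finset.univ.filter fun i => x i ≠ 0).card = 2 ∧
        ∀ i, x i ≠ 0 → x i = 2 ∨ x i = -2) ∧
      (∀ x ∈ X, ‖x‖ = Real.sqrt 8) ∧
      (∀ x ∈ X, ∀ y ∈ X, x ≠ y → Real.sqrt 8 ≤ dist x y) := by
  have hdisj : Disjoint (oddMinVectors.image toEuclidean) (evenMinVectors.image toEuclidean) :=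
    (disjoint_image toEuclidean_injective).2 disjoint_oddMinVectors_evenMinVectors
  refine ⟨(oddMinVectors ∪ evenMinVectors).image toEuclidean, _, _, image_union _ _, hdisj,
    ?_, ?_, ?_, ?_, ?_, ?_, ?_⟩
  · rw [image_union, card_union_of_disjoint hdisj, card_image_of_injective _ toEuclidean_injective,
      card_image_of_injective _ toEuclidean_injective, card_oddMinVectors, card_evenMinVectors]
  · rw [card_image_of_injective _ toEuclidean_injective, card_oddMinVectors]
  · rw [card_image_of_injective _ toEuclidean_injective, card_evenMinVectors]
  · refine forall_mem_image.2 fun v hv => ?_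
    obtain ⟨hsign, he⟩ := mem_oddMinVectors.1 hv
    simp only [toEuclidean_apply]
    exact ⟨fun i => by exact_mod_cast hsign i, by exact_mod_cast he⟩
  · refine forall_mem_image.2 fun v hv => ?_
    obtain ⟨hv, hs⟩ := mem_evenMinVectors.1 hv
    simp only [toEuclidean_apply]
    refine ⟨by exact_mod_cast hs, fun i hi => ?_⟩
    rcases hv i with h | h | h <;> simp_all
  · exact forall_mem_image.2 fun v hv => by
      simp [norm_toEuclidean, (inTwoDPlus_and_sum_sq_of_mem hv).2]
  · refine forall_mem_image.2 fun v hv => forall_mem_image.2 fun w hw hvw => ?_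
    obtain ⟨hv, hv8⟩ := inTwoDPlus_and_sum_sq_of_mem hv
    obtain ⟨hw, hw8⟩ := inTwoDPlus_and_sum_sq_of_mem hw
    exact sqrt_eight_le_dist_toEuclidean (by decide) hv hw hv8 hw8 (ne_of_apply_ne _ hvw)
end
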